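/- The following are equivalent: (1) the Continuum Hypothesis; (2) there exists a partition P ⊆ [ℝ]^{≤ω} of ℝ into countable sets such that for every subfamily A ⊆ P, ⋃A is [ℝ]^{≤ω}-nonmeasurable if and only if ⋃A is completely [ℝ]^{≤ω}-nonmeasurable. -/
import Mathlib
open Cardinal
open scoped Classical


/-- A (proper) σ-ideal of subsets of ℝ. -/
def SigmaIdeal (I : Set (Set ℝ)) : Prop :=
  ∅ ∈ I ∧ Set.univ ∉ I ∧ (∀ A B : Set ℝ, A ⊆ B → B ∈ I → A ∈ I) ∧
    ∀ f : ℕ → Set ℝ, (∀ n, f n ∈ I) → (⋃ n, f n) ∈ I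

/-- The ideal contains all singletons. -/
def ContainsSingletons (I : Set (Set ℝ)) : Prop := ∀ x : ℝ, {x} ∈ I

/-- The ideal has a Borel base. -/
def BorelBase (I : Set (Set ℝ)) : Prop :=
  ∀ A ∈ I, ∃ B ∈ I, MeasurableSet B ∧ A ⊆ B

/-- The ideal is translation invariant. -/
def TranslationInvariant (I : Set (Set ℝ)) : Prop :=
  ∀ A ∈ I, ∀ x : ℝ, (fun y => x + y) '' A ∈ I

/-- The σ-algebra Bor[I] generated by the Borel sets together with I. -/
def BorI (I : Set (Set ℝ)) : MeasurableSpace ℝ :=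
  MeasurableSpace.generateFrom {s : Set ℝ | MeasurableSet s ∨ s ∈ I}

/-- A set is I-nonmeasurable if it is not in Bor[I]. -/
def INonmeasurable (I : Set (Set ℝ)) (A : Set ℝ) : Prop :=
  ¬ @MeasurableSet ℝ (BorI I) A

/-- A set is completely I-nonmeasurable if its intersection with every
I-positive Borel set is I-nonmeasurable. -/
def CompletelyINonmeasurable (I : Set (Set ℝ)) (A : Set ℝ) : Prop :=
  ∀ B : Set ℝ, MeasurableSet B → B ∉ I → INonmeasurable I (A ∩ B)

/-- A partition of ℝ. -/
def IsPartitionOfReals (P : Set (Set ℝ)) : Prop :=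
  (∀ p ∈ P, p ≠ ∅) ∧ ⋃₀ P = Set.univ ∧
    ∀ p ∈ P, ∀ q ∈ P, p ≠ q → p ∩ q = ∅

/-- The σ-ideal of countable subsets of ℝ. -/
def ctblIdeal : Set (Set ℝ) := {A : Set ℝ | A.Countable}

/-- A Bernstein set: it and its complement meet every nonempty perfect set. -/
def BernsteinSet (A : Set ℝ) : Prop :=
  ∀ P : Set ℝ, Perfect P → P.Nonempty → (P ∩ A).Nonempty ∧ (P ∩ Aᶜ).Nonempty

lemma borI_ctbl : BorI ctblIdeal = (inferInstance : MeasurableSpace ℝ) := by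
  apply le_antisymm
  · exact MeasurableSpace.generateFrom_le fun s hs => hs.elim id fun h => h.measurableSet
  · intro s hs
    exact MeasurableSpace.measurableSet_generateFrom (Or.inl hs)

lemma iNonmeas_iff (s : Set ℝ) : INonmeasurable ctblIdeal s ↔ ¬ MeasurableSet s := by
  rw [INonmeasurable, borI_ctbl]

-- uncountable Borel contains uncountable closed
lemma exists_closed_unc_subset {s : Set ℝ} (hs : MeasurableSet s) (hunc : ¬ s.Countable) :
    ∃ C : Set ℝ, C ⊆ s ∧ IsClosed C ∧ ¬ C.Countable := by
  obtain ⟨t', ht'le, ht'pol, hclosed, -⟩ := hs.isClopenable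
  obtain ⟨f, hrange, hcont, hinj⟩ :=
    @IsClosed.exists_nat_bool_injection_of_not_countable ℝ t' ht'pol s hclosed hunc
  have hcomp : @IsCompact ℝ UniformSpace.toTopologicalSpace (Set.range f) := by
    have h1 : @IsCompact ℝ t' (Set.range f) := @isCompact_range _ _ _ t' _ f hcont
    have h2 := @IsCompact.image ℝ ℝ t' UniformSpace.toTopologicalSpace (Set.range f) id h1
        (continuous_id_of_le ht'le)
    simpa using h2
  refine ⟨Set.range f, hrange,
    @IsCompact.isClosed ℝ UniformSpace.toTopologicalSpace _ _ hcomp, fun hcnt => ?_⟩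
  have : Countable (ℕ → Bool) := by
    have e := Equiv.ofInjective f hinj
    have : Countable ↥(Set.range f) := hcnt.to_subtype
    exact Countable.of_equiv _ e.symm
  have hm : (#(ℕ → Bool)) ≤ Cardinal.aleph0 := Cardinal.mk_le_aleph0
  rw [← Cardinal.power_def, Cardinal.mk_bool, Cardinal.mk_nat, Cardinal.two_power_aleph0] at hm
  exact absurd hm (not_le.mpr Cardinal.aleph0_lt_continuum)


-- uncountable Borel set has continuum many points
lemma continuum_le_mk_of_unc_meas {s : Set ℝ} (hs : MeasurableSet s) (hunc : ¬ s.Countable) :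
    Cardinal.continuum ≤ #s := by
  obtain ⟨C, hCs, hCcl, hCunc⟩ := exists_closed_unc_subset hs hunc
  obtain ⟨f, hrange, -, hinj⟩ := hCcl.exists_nat_bool_injection_of_not_countable hCunc
  have h : #(ℕ → Bool) ≤ #s := by
    refine Cardinal.mk_le_of_injective (f := fun a => (⟨f a, hCs (hrange ⟨a, rfl⟩)⟩ : s)) ?_
    intro a b hab
    exact hinj (congrArg Subtype.val hab)
  rwa [← Cardinal.power_def, Cardinal.mk_bool, Cardinal.mk_nat, Cardinal.two_power_aleph0] at h

-- there are at most continuum many closed sets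
lemma mk_closed_le_continuum : #{C : Set ℝ | IsClosed C} ≤ Cardinal.continuum := by
  obtain ⟨b, hbc, -, hbasis⟩ := TopologicalSpace.exists_countable_basis ℝ
  have hinj : Function.Injective
      (fun C : {C : Set ℝ | IsClosed C} => ({u : b | (u : Set ℝ) ⊆ (C : Set ℝ)ᶜ} : Set b)) := by
    intro C D h
    have hC := hbasis.open_eq_sUnion' C.2.isOpen_compl
    have hD := hbasis.open_eq_sUnion' D.2.isOpen_compl
    have hset : {s : Set ℝ | s ∈ b ∧ s ⊆ (C : Set ℝ)ᶜ} = {s : Set ℝ | s ∈ b ∧ s ⊆ (D : Set ℝ)ᶜ} := by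
      ext u
      constructor
      · rintro ⟨hub, hsub⟩
        exact ⟨hub, by simpa using Set.ext_iff.mp h ⟨u, hub⟩ |>.mp hsub⟩
      · rintro ⟨hub, hsub⟩
        exact ⟨hub, by simpa using Set.ext_iff.mp h ⟨u, hub⟩ |>.mpr hsub⟩
    have : (C : Set ℝ)ᶜ = (D : Set ℝ)ᶜ := by rw [hC, hD, hset]
    exact Subtype.ext (compl_injective this)
  calc #{C : Set ℝ | IsClosed C} ≤ #(Set b) := Cardinal.mk_le_of_injective hinj
    _ = 2 ^ #b := Cardinal.mk_set
    _ ≤ 2 ^ Cardinal.aleph0 := by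
        exact Cardinal.power_le_power_left (by norm_num) hbc.le_aleph0
    _ = Cardinal.continuum := Cardinal.two_power_aleph0

abbrev Idx1 : Type := (Cardinal.aleph 1).ord.ToType

lemma Idx1.Iio_countable (i : Idx1) : (Set.Iio i).Countable := by
  rw [Cardinal.countable_iff_lt_aleph_one]
  exact Cardinal.mk_Iio_ord_toType i

lemma Idx1.Iic_countable (i : Idx1) : (Set.Iic i).Countable := by
  rw [← Set.Iio_union_right]
  exact (Idx1.Iio_countable i).union (Set.countable_singleton i)

lemma Idx1.mk_eq : #Idx1 = Cardinal.aleph 1 := by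
  rw [Cardinal.mk_toType, Cardinal.card_ord]

/-- at stage `i`, with `prev` the union of the earlier pieces, pick one point from
`g j \ prev` for every `j ≤ i`. -/
noncomputable def pickSet (g : Idx1 → Set ℝ) (prev : Set ℝ) (i : Idx1) : Set ℝ :=
  ⋃ j ∈ Set.Iic i, if h : ((g j) \ prev).Nonempty then {h.choose} else ∅

/-- the transfinite construction of the pieces of the partition. -/
noncomputable def pieces (x : Idx1 → ℝ) (g : Idx1 → Set ℝ) : Idx1 → Set ℝ :=
  (wellFounded_lt (α := Idx1)).fix fun i rec =>
    ({x i} \ (⋃ j, ⋃ h : j < i, rec j h)) ∪ pickSet g (⋃ j, ⋃ h : j < i, rec j h) i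

/-- union of the pieces before `i`. -/
noncomputable def prevU (x : Idx1 → ℝ) (g : Idx1 → Set ℝ) (i : Idx1) : Set ℝ :=
  ⋃ j, ⋃ _h : j < i, pieces x g j

lemma pieces_eq (x : Idx1 → ℝ) (g : Idx1 → Set ℝ) (i : Idx1) :
    pieces x g i = ({x i} \ prevU x g i) ∪ pickSet g (prevU x g i) i := by
  rw [pieces, WellFounded.fix_eq]
  rfl

lemma prevU_eq (x : Idx1 → ℝ) (g : Idx1 → Set ℝ) (i : Idx1) :
    prevU x g i = ⋃ j ∈ Set.Iio i, pieces x g j := rfl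

lemma pickSet_subset_diff (g : Idx1 → Set ℝ) (prev : Set ℝ) (i : Idx1) {j : Idx1}
    (hj : j ≤ i) (hne : ((g j) \ prev).Nonempty) : hne.choose ∈ pickSet g prev i := by
  rw [pickSet]
  refine Set.mem_biUnion hj ?_
  rw [dif_pos hne]
  exact rfl

lemma pickSet_mem {g : Idx1 → Set ℝ} {prev : Set ℝ} {i : Idx1} {y : ℝ}
    (hy : y ∈ pickSet g prev i) : ∃ j ≤ i, ∃ h : ((g j) \ prev).Nonempty, y = h.choose := by
  rw [pickSet] at hy
  obtain ⟨j, hj, hy⟩ := Set.mem_iUnion₂.mp hy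
  by_cases h : ((g j) \ prev).Nonempty
  · rw [dif_pos h] at hy
    exact ⟨j, hj, h, hy⟩
  · rw [dif_neg h] at hy
    exact absurd hy (Set.notMem_empty y)

lemma pickSet_countable (g : Idx1 → Set ℝ) (prev : Set ℝ) (i : Idx1) :
    (pickSet g prev i).Countable := by
  refine (Idx1.Iic_countable i).biUnion fun j _ => ?_
  by_cases h : ((g j) \ prev).Nonempty
  · rw [dif_pos h]; exact Set.countable_singleton _
  · rw [dif_neg h]; exact Set.countable_empty

lemma pieces_countable (x : Idx1 → ℝ) (g : Idx1 → Set ℝ) (i : Idx1) :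
    (pieces x g i).Countable := by
  rw [pieces_eq]
  exact ((Set.countable_singleton (x i)).mono Set.diff_subset).union
    (pickSet_countable g _ i)

lemma prevU_countable (x : Idx1 → ℝ) (g : Idx1 → Set ℝ) (i : Idx1) :
    (prevU x g i).Countable := by
  rw [prevU_eq]
  exact (Idx1.Iio_countable i).biUnion fun j _ => pieces_countable x g j

lemma pieces_disjoint_prevU (x : Idx1 → ℝ) (g : Idx1 → Set ℝ) (i : Idx1) {y : ℝ}
    (hy : y ∈ pieces x g i) : y ∉ prevU x g i := by
  rw [pieces_eq] at hy
  rcases hy with hy | hy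
  · exact hy.2
  · obtain ⟨j, _, h, rfl⟩ := pickSet_mem hy
    exact h.choose_spec.2

lemma pieces_disjoint (x : Idx1 → ℝ) (g : Idx1 → Set ℝ) {i j : Idx1} (hij : i ≠ j) :
    pieces x g i ∩ pieces x g j = ∅ := by
  rcases hij.lt_or_gt with h | h
  · ext y
    simp only [Set.mem_inter_iff, Set.mem_empty_iff_false, iff_false, not_and]
    intro hyi hyj
    exact pieces_disjoint_prevU x g j hyj (Set.mem_biUnion h hyi)
  · ext y
    simp only [Set.mem_inter_iff, Set.mem_empty_iff_false, iff_false, not_and]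
    intro hyi hyj
    exact pieces_disjoint_prevU x g i hyi (Set.mem_biUnion h hyj)

lemma pieces_hits (x : Idx1 → ℝ) (g : Idx1 → Set ℝ) (hg : ∀ j, ¬ (g j).Countable)
    {i j : Idx1} (hj : j ≤ i) : (pieces x g i ∩ g j).Nonempty := by
  have hne : ((g j) \ prevU x g i).Nonempty := by
    rw [Set.nonempty_iff_ne_empty]
    intro h
    exact hg j ((prevU_countable x g i).mono (Set.diff_eq_empty.mp h))
  refine ⟨hne.choose, ?_, hne.choose_spec.1⟩
  rw [pieces_eq]
  exact Or.inr (pickSet_subset_diff g _ i hj hne)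

lemma pieces_nonempty (x : Idx1 → ℝ) (g : Idx1 → Set ℝ) (hg : ∀ j, ¬ (g j).Countable)
    (i : Idx1) : (pieces x g i).Nonempty := by
  obtain ⟨y, hy, -⟩ := pieces_hits x g hg (le_refl i)
  exact ⟨y, hy⟩

lemma pieces_covers (x : Idx1 → ℝ) (g : Idx1 → Set ℝ) (hx : Function.Surjective x)
    (r : ℝ) : ∃ i, r ∈ pieces x g i := by
  obtain ⟨i, rfl⟩ := hx r
  by_cases h : x i ∈ prevU x g i
  · rw [prevU_eq] at h
    obtain ⟨j, -, hj⟩ := Set.mem_iUnion₂.mp h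
    exact ⟨j, hj⟩
  · refine ⟨i, ?_⟩
    rw [pieces_eq]
    exact Or.inl ⟨rfl, h⟩

lemma pieces_injective (x : Idx1 → ℝ) (g : Idx1 → Set ℝ) (hg : ∀ j, ¬ (g j).Countable) :
    Function.Injective (pieces x g) := by
  intro i j hij
  by_contra h
  obtain ⟨y, hy⟩ := pieces_nonempty x g hg i
  have : y ∈ pieces x g i ∩ pieces x g j := ⟨hy, hij ▸ hy⟩
  rw [pieces_disjoint x g h] at this
  exact this

lemma CH_univ_iff : Cardinal.continuum.{u} = Cardinal.aleph.{u} 1 ↔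
    Cardinal.continuum.{0} = Cardinal.aleph.{0} 1 := by
  have key : Cardinal.lift.{u,0} Cardinal.continuum.{0} = Cardinal.continuum.{u} :=
    Cardinal.lift_continuum
  have key2 : Cardinal.lift.{u,0} (Cardinal.aleph.{0} 1) = Cardinal.aleph.{u} 1 := by
    rw [Cardinal.lift_aleph, Ordinal.lift_one]
  rw [← key, ← key2, Cardinal.lift_inj]

lemma forward (hCH : Cardinal.continuum.{0} = Cardinal.aleph.{0} 1) :
    ∃ P : Set (Set ℝ), (∀ p ∈ P, p.Countable) ∧ IsPartitionOfReals P ∧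
      ∀ A ⊆ P, (INonmeasurable ctblIdeal (⋃₀ A) ↔
        CompletelyINonmeasurable ctblIdeal (⋃₀ A)) := by
  -- a surjection from the index type onto ℝ
  have hmkR : #ℝ = #Idx1 := by rw [Cardinal.mk_real, hCH, Idx1.mk_eq]
  obtain ⟨e⟩ := Cardinal.eq.mp hmkR
  set x : Idx1 → ℝ := ⇑e.symm with hxdef
  have hx : Function.Surjective x := e.symm.surjective
  -- a surjection from the index type onto the uncountable closed sets
  have hCne : Nonempty {C : Set ℝ | IsClosed C ∧ ¬ C.Countable} :=
    ⟨⟨Set.univ, isClosed_univ, Cardinal.not_countable_real⟩⟩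
  have hCle : #{C : Set ℝ | IsClosed C ∧ ¬ C.Countable} ≤ #Idx1 := by
    rw [Idx1.mk_eq, ← hCH]
    exact le_trans (Cardinal.mk_le_mk_of_subset fun C hC => hC.1) mk_closed_le_continuum
  obtain ⟨j⟩ := (Cardinal.le_def _ _).mp hCle
  set g0 : Idx1 → {C : Set ℝ | IsClosed C ∧ ¬ C.Countable} := Function.invFun j with hg0
  have hg0surj : Function.Surjective g0 := Function.invFun_surjective j.injective
  set g : Idx1 → Set ℝ := fun i => (g0 i : Set ℝ) with hgdef
  have hg : ∀ i, ¬ (g i).Countable := fun i => (g0 i).2.2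
  have hgsurj : ∀ C : Set ℝ, IsClosed C → ¬ C.Countable → ∃ i, g i = C := by
    intro C hC1 hC2
    obtain ⟨i, hi⟩ := hg0surj ⟨C, hC1, hC2⟩
    exact ⟨i, by simp only [hgdef, hi]⟩
  -- the partition
  refine ⟨Set.range (pieces x g), ?_, ⟨?_, ?_, ?_⟩, ?_⟩
  · rintro p ⟨i, rfl⟩
    exact pieces_countable x g i
  · rintro p ⟨i, rfl⟩
    exact (pieces_nonempty x g hg i).ne_empty
  · ext r
    simp only [Set.mem_univ, iff_true]
    obtain ⟨i, hi⟩ := pieces_covers x g hx r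
    exact ⟨pieces x g i, ⟨i, rfl⟩, hi⟩
  · rintro p ⟨i, rfl⟩ q ⟨k, rfl⟩ hpq
    exact pieces_disjoint x g (fun h => hpq (by rw [h]))
  -- the main property
  intro A hA
  constructor
  swap
  · intro hcomp
    have := hcomp Set.univ MeasurableSet.univ
      (by exact fun h => Cardinal.not_countable_real h)
    rwa [Set.inter_univ] at this
  intro hnon
  rw [iNonmeas_iff] at hnon
  intro B hB hBI
  have hBunc : ¬ B.Countable := hBI
  rw [iNonmeas_iff]
  intro hBor
  set S : Set Idx1 := {i | pieces x g i ∈ A} with hSdef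
  have hU : ⋃₀ A = ⋃ i ∈ S, pieces x g i := by
    ext r
    constructor
    · rintro ⟨a, haA, hra⟩
      obtain ⟨i, rfl⟩ := hA haA
      exact Set.mem_biUnion haA hra
    · intro hr
      obtain ⟨i, hiS, hri⟩ := Set.mem_iUnion₂.mp hr
      exact ⟨pieces x g i, hiS, hri⟩
  have hS : ¬ S.Countable := by
    intro hc
    refine hnon ?_
    rw [hU]
    exact (hc.biUnion fun i _ => pieces_countable x g i).measurableSet
  have hSc : ¬ Sᶜ.Countable := by
    intro hc
    have hsub : (⋃₀ A)ᶜ ⊆ ⋃ i ∈ Sᶜ, pieces x g i := by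
      intro r hr
      obtain ⟨i, hi⟩ := pieces_covers x g hx r
      refine Set.mem_biUnion (fun hiS => hr ?_) hi
      rw [hU]; exact Set.mem_biUnion hiS hi
    have : ((⋃₀ A)ᶜ).Countable :=
      (hc.biUnion fun i _ => pieces_countable x g i).mono hsub
    exact hnon (by simpa using this.measurableSet.compl)
  -- Step 1 : ⋃₀ A ∩ B is uncountable
  have hstep1 : ¬ (⋃₀ A ∩ B).Countable := by
    obtain ⟨C, hCB, hCcl, hCunc⟩ := exists_closed_unc_subset hB hBunc
    obtain ⟨γ, hγ⟩ := hgsurj C hCcl hCunc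
    set T : Set Idx1 := S ∩ {α | γ ≤ α} with hTdef
    have hT : ¬ T.Countable := by
      intro hc
      refine hS (((hc.union (Idx1.Iio_countable γ))).mono ?_)
      intro α hαS
      rcases le_or_gt γ α with h | h
      · exact Or.inl ⟨hαS, h⟩
      · exact Or.inr h
    intro hcnt
    refine hT ?_
    rw [← Set.countable_coe_iff] at hcnt ⊢
    have hp : ∀ α : T, ((pieces x g α ∩ g γ)).Nonempty :=
      fun α => pieces_hits x g hg α.2.2
    have hmem : ∀ α : T, (hp α).choose ∈ ⋃₀ A ∩ B := by
      intro α
      refine ⟨?_, hCB (hγ ▸ (hp α).choose_spec.2)⟩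
      rw [hU]
      exact Set.mem_biUnion α.2.1 (hp α).choose_spec.1
    have hinj : Function.Injective (fun α : T => (⟨(hp α).choose, hmem α⟩ : (⋃₀ A ∩ B : Set ℝ))) := by
      intro α β hαβ
      by_contra hne
      have hval : (hp α).choose = (hp β).choose := congrArg Subtype.val hαβ
      have hd := pieces_disjoint x g (i := α) (j := β) (fun h => hne (Subtype.ext h))
      have : (hp α).choose ∈ pieces x g α ∩ pieces x g β :=
        ⟨(hp α).choose_spec.1, hval ▸ (hp β).choose_spec.1⟩
      rw [hd] at this
      exact this
    exact hinj.countable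
  -- Step 2 : contradiction
  obtain ⟨D, hDsub, hDcl, hDunc⟩ := exists_closed_unc_subset hBor hstep1
  obtain ⟨δ, hδ⟩ := hgsurj D hDcl hDunc
  obtain ⟨β, hβS, hβδ⟩ : ∃ β, β ∈ Sᶜ ∧ δ ≤ β := by
    by_contra h
    push_neg at h
    refine hSc ((Idx1.Iio_countable δ).mono ?_)
    intro β hβ
    exact h β hβ
  have hz := pieces_hits x g hg (i := β) (j := δ) hβδ
  have hzA : hz.choose ∈ ⋃₀ A := (hDsub (hδ ▸ hz.choose_spec.2)).1
  rw [hU] at hzA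
  obtain ⟨α, hαS, hzα⟩ := Set.mem_iUnion₂.mp hzA
  have hαβ : α ≠ β := fun h => hβS (h ▸ hαS)
  have hd := pieces_disjoint x g hαβ
  have : hz.choose ∈ pieces x g α ∩ pieces x g β := ⟨hzα, hz.choose_spec.1⟩
  rw [hd] at this
  exact this

lemma backward
    (h : ∃ P : Set (Set ℝ), (∀ p ∈ P, p.Countable) ∧ IsPartitionOfReals P ∧
      ∀ A ⊆ P, (INonmeasurable ctblIdeal (⋃₀ A) ↔
        CompletelyINonmeasurable ctblIdeal (⋃₀ A))) :
    Cardinal.continuum.{0} = Cardinal.aleph.{0} 1 := by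
  refine le_antisymm ?_ Cardinal.aleph_one_le_continuum
  by_contra hlt
  rw [not_le] at hlt
  obtain ⟨P, hPc, ⟨hPne, hPun, hPdis⟩, hmain⟩ := h
  -- P is uncountable
  have hPunc : ¬ P.Countable := by
    intro hc
    have : (Set.univ : Set ℝ).Countable := hPun ▸ hc.sUnion (fun t ht => hPc t ht)
    exact Cardinal.not_countable_real this
  have hP1 : Cardinal.aleph 1 ≤ #P := by
    by_contra hle
    rw [not_le] at hle
    exact hPunc ((Cardinal.countable_iff_lt_aleph_one _).mpr hle)
  -- a subfamily of size ℵ₁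
  obtain ⟨q, hq⟩ := Cardinal.le_mk_iff_exists_set.mp hP1
  set A : Set (Set ℝ) := Subtype.val '' q with hAdef
  have hAsub : A ⊆ P := by rintro a ⟨⟨a, ha⟩, -, rfl⟩; exact ha
  have hAcard : #A = Cardinal.aleph 1 := by
    rw [hAdef, Cardinal.mk_image_eq Subtype.val_injective, hq]
  -- the union has size at most ℵ₁
  have hUle : #(⋃₀ A) ≤ Cardinal.aleph 1 := by
    rcases Set.eq_empty_or_nonempty A with hE | hNE
    · rw [hE]; simp
    · have : Nonempty A := hNE.to_subtype
      calc #(⋃₀ A) ≤ #A * ⨆ s : A, #s := Cardinal.mk_sUnion_le A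
        _ ≤ Cardinal.aleph 1 * Cardinal.aleph0 := by
            refine mul_le_mul' hAcard.le (ciSup_le' fun s => ?_)
            rw [Cardinal.mk_le_aleph0_iff, Set.countable_coe_iff]
            exact hPc s (hAsub s.2)
        _ ≤ Cardinal.aleph 1 * Cardinal.aleph 1 :=
            mul_le_mul' le_rfl (Cardinal.aleph0_le_aleph 1)
        _ = Cardinal.aleph 1 := Cardinal.mul_eq_self (Cardinal.aleph0_le_aleph 1)
  -- the union is uncountable
  have hUunc : ¬ (⋃₀ A).Countable := by
    intro hc
    have hchoice : ∀ s : A, ∃ y : ℝ, y ∈ (s : Set ℝ) := by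
      rintro ⟨s, hs⟩
      exact Set.nonempty_iff_ne_empty.mpr (hPne s (hAsub hs))
    choose c hc2 using hchoice
    have hcinj : Function.Injective c := by
      intro s t hst
      by_contra hne
      have hd := hPdis s (hAsub s.2) t (hAsub t.2) (fun h => hne (Subtype.ext h))
      have : c s ∈ (s : Set ℝ) ∩ (t : Set ℝ) := ⟨hc2 s, hst ▸ hc2 t⟩
      rw [hd] at this
      exact this
    have : Countable A := by
      have : Countable (⋃₀ A) := hc.to_subtype
      exact Function.Injective.countable
        (f := fun s : A => (⟨c s, Set.mem_sUnion.mpr ⟨s, s.2, hc2 s⟩⟩ : (⋃₀ A : Set ℝ)))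
        (fun s t h => hcinj (congrArg Subtype.val h))
    have hAc : A.Countable := Set.countable_coe_iff.mp this
    have := (Cardinal.countable_iff_lt_aleph_one _).mp hAc
    rw [hAcard] at this
    exact lt_irrefl _ this
  -- the union is not Borel
  have hUnb : ¬ MeasurableSet (⋃₀ A) := by
    intro hmeas
    have := continuum_le_mk_of_unc_meas hmeas hUunc
    exact absurd (lt_of_le_of_lt (this.trans hUle) hlt) (lt_irrefl _)
  -- hence completely nonmeasurable
  have hcomp : CompletelyINonmeasurable ctblIdeal (⋃₀ A) :=
    (hmain A hAsub).mp ((iNonmeas_iff _).mpr hUnb)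
  -- fibers of a Borel isomorphism ℝ ≃ ℝ × ℝ give continuum many disjoint
  -- uncountable Borel sets
  have e : ℝ ≃ᵐ (ℝ × ℝ) :=
    PolishSpace.measurableEquivOfNotCountable (not_countable) (not_countable)
  set F : ℝ → Set ℝ := fun r => e ⁻¹' ({r} ×ˢ (Set.univ : Set ℝ)) with hFdef
  have hFmeas : ∀ r, MeasurableSet (F r) :=
    fun r => e.measurable ((measurableSet_singleton r).prod MeasurableSet.univ)
  have hFmem : ∀ r y, y ∈ F r ↔ (e y).1 = r := by
    intro r y
    constructor
    · intro hy
      rw [hFdef] at hy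
      exact (Set.mem_prod.mp hy).1
    · intro hy
      rw [hFdef]
      exact Set.mem_prod.mpr ⟨hy, Set.mem_univ _⟩
  have hFunc : ∀ r, ¬ (F r).Countable := by
    intro r hc
    have himg : e '' (F r) = {r} ×ˢ (Set.univ : Set ℝ) := by
      rw [hFdef]
      exact Set.image_preimage_eq _ e.surjective
    have : ({r} ×ˢ (Set.univ : Set ℝ)).Countable := himg ▸ hc.image e
    have huniv : (Set.univ : Set ℝ).Countable := by
      have hpre : ((fun y : ℝ => ((r : ℝ), y)) ⁻¹' ({r} ×ˢ (Set.univ : Set ℝ))).Countable :=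
        this.preimage (fun a b hab => congrArg Prod.snd hab)
      refine hpre.mono fun y _ => ?_
      simp [Set.mem_preimage, Set.mem_prod]
    exact Cardinal.not_countable_real huniv
  -- some fiber misses ⋃₀ A
  obtain ⟨r, hr⟩ : ∃ r, ⋃₀ A ∩ F r = ∅ := by
    by_contra hne
    push_neg at hne
    have hch : ∀ r : ℝ, ∃ y, y ∈ ⋃₀ A ∩ F r := fun r => hne r
    choose c hc2 using hch
    have hcinj : Function.Injective c := by
      intro r s hrs
      have h1 : (e (c r)).1 = r := (hFmem r (c r)).mp (hc2 r).2
      have h2 : (e (c s)).1 = s := (hFmem s (c s)).mp (hc2 s).2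
      rw [← h1, ← h2, hrs]
    have : Cardinal.continuum ≤ #(⋃₀ A) := by
      rw [← Cardinal.mk_real]
      exact Cardinal.mk_le_of_injective
        (f := fun r => (⟨c r, (hc2 r).1⟩ : (⋃₀ A : Set ℝ)))
        (fun r s h => hcinj (congrArg Subtype.val h))
    exact absurd (lt_of_le_of_lt (this.trans hUle) hlt) (lt_irrefl _)
  -- contradiction with complete nonmeasurability
  have := hcomp (F r) (hFmeas r) (hFunc r)
  rw [hr, iNonmeas_iff] at this
  exact this MeasurableSet.empty

theorem CH_iff_exists_partition_nonmeasurable_iff_completely :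
    Cardinal.continuum = Cardinal.aleph 1 ↔
      ∃ P : Set (Set ℝ), (∀ p ∈ P, p.Countable) ∧ IsPartitionOfReals P ∧
        ∀ A ⊆ P, (INonmeasurable ctblIdeal (⋃₀ A) ↔
          CompletelyINonmeasurable ctblIdeal (⋃₀ A)) := by
  rw [CH_univ_iff]
  exact ⟨forward, backward⟩
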